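/- If there exists a B(n+1)-configuration that freely contains exactly two K_n-graphs, then there exists a B(n+1)-configuration that freely contains no K_n-graph at all. (Obtained by a 'line switch': replacing two lines {q,a_1,b_1}, {q,a_2,b_2} through a common intersection point q of sides of the two graphs by {q,a_1,b_2}, {q,b_1,a_2}.) -/

import Mathlib

open Finset

/-- A partial Steiner triple system: a finite incidence structure given by its
set of lines (3-element subsets of the point set) such that two distinct
points lie on at most one common line. -/
structure PSTS (S : Type) where
  lines : Finset (Finset S)
  card3 : ∀ L ∈ lines, L.card = 3
  unique : ∀ L₁ ∈ lines, ∀ L₂ ∈ lines, ∀ a b : S, a ≠ b →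
    a ∈ L₁ → b ∈ L₁ → a ∈ L₂ → b ∈ L₂ → L₁ = L₂

/-- The rank of a point: the number of lines through it. -/
def pointRank {S : Type} [DecidableEq S] (M : PSTS S) (p : S) : ℕ :=
  (M.lines.filter (fun L => p ∈ L)).card

/-- A binomial B(m)-configuration: C(m,2) points, each of rank m-2, and C(m,3) lines. -/
def IsBinomial {S : Type} [Fintype S] [DecidableEq S] (M : PSTS S) (m : ℕ) : Prop :=
  Fintype.card S = Nat.choose m 2 ∧ M.lines.card = Nat.choose m 3 ∧
    ∀ p : S, pointRank M p = m - 2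

/-- `L` is a side of the complete graph on `X`: a line of `M` meeting `X` in
exactly two points (the extension of an edge of `K_X`). -/
def IsSide {S : Type} [DecidableEq S] (M : PSTS S) (X L : Finset S) : Prop :=
  L ∈ M.lines ∧ (L ∩ X).card = 2

instance {S : Type} [DecidableEq S] (M : PSTS S) (X L : Finset S) :
    Decidable (IsSide M X L) := by
  unfold IsSide; infer_instance

/-- The complete graph on the vertex set `X` is freely contained in `M`:
every edge of `K_X` extends to a (necessarily unique) line of `M` which meets
`X` in exactly two points (hence distinct edges extend to distinct lines), and
two distinct sides never meet outside `X`. -/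
def FreelyContains {S : Type} [DecidableEq S] (M : PSTS S) (X : Finset S) : Prop :=
  (∀ a ∈ X, ∀ b ∈ X, a ≠ b → ∃ L ∈ M.lines, a ∈ L ∧ b ∈ L ∧ (L ∩ X).card = 2) ∧
  (∀ L₁ L₂ : Finset S, IsSide M X L₁ → IsSide M X L₂ → L₁ ≠ L₂ →
    ∀ p, p ∈ L₁ → p ∈ L₂ → p ∈ X)

/-- `(Z,G)` is a B(m)-configuration regularly contained in `M` (a subspace):
the lines of `G` are lines of `M` lying in `Z`, every line of `M` meeting `Z`
in at least two points belongs to `G`, and `(Z,G)` has the binomial B(m) parameters. -/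
def RegularBinomialSub {S : Type} [DecidableEq S] (M : PSTS S)
    (Z : Finset S) (G : Finset (Finset S)) (m : ℕ) : Prop :=
  G ⊆ M.lines ∧ (∀ L ∈ G, L ⊆ Z) ∧
  (∀ L ∈ M.lines, 2 ≤ (L ∩ Z).card → L ∈ G) ∧
  Z.card = Nat.choose m 2 ∧ G.card = Nat.choose m 3 ∧
  ∀ p ∈ Z, (G.filter (fun L => p ∈ L)).card = m - 2

/-- The lines of the combinatorial Grassmannian G(Y,2): triples of 2-subsets
of `Y` contained in a common 3-subset. -/
def GrasLines (Y : Type) [Fintype Y] [DecidableEq Y] :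
    Finset (Finset {e : Finset Y // e.card = 2}) :=
  (Finset.univ.filter (fun f : Finset Y => f.card = 3)).image
    (fun f => Finset.univ.filter (fun e : {e : Finset Y // e.card = 2} => e.val ⊆ f))

/-- `M` freely contains exactly `m` complete `K_j`-graphs. -/
def ExactlyKGraphs {S : Type} [DecidableEq S] (M : PSTS S) (j m : ℕ) : Prop :=
  ∃ f : Fin m → Finset S, Function.Injective f ∧
    (∀ i, (f i).card = j ∧ FreelyContains M (f i)) ∧
    (∀ X : Finset S, X.card = j → FreelyContains M X → ∃ i, X = f i)

/-!
Two distinct freely contained `K_n`-graphs `X₁, X₂` of a `B(n+1)`-configuration `M` meet in a single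
point `p`, every line through `p` joins a vertex of `X₁` to a vertex of `X₂`, and every point off a
freely contained `K_n` lies on one of its sides. So a point `q ∉ X₁ ∪ X₂` lies on sides
`{q, a₁, b₁}` of `X₁` and `{q, a₂, b₂}` of `X₂`, labelled so that neither `a₁, b₂` nor `b₁, a₂` are
collinear, and replacing these two lines by `{q, a₁, b₂}` and `{q, b₁, a₂}` keeps the ranks and the
number of lines.

A freely contained `K_n`-graph `X` of the switched configuration contains neither `{a₁, b₁}` nor
`{a₂, b₂}`, which are no longer collinear. If it contains `{a₁, b₂}` (or `{b₁, a₂}`), the lines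
through `p` yield a line of `M` carrying three vertices of `X` (this is where `n ≥ 4` enters) or a
line of `M` joining `a₁` and `b₂`. Otherwise `X` is freely contained in `M` too: either it meets the
four lines of the switch in at most one point each, or it contains `q, a₁, a₂` (or `q, b₁, b₂`)
and the old and the new lines through `q` cut out the same edges of `X`. Then `X` is `X₁` or `X₂`,
which is absurd as these contain `a₁, b₁` resp. `a₂, b₂` and miss `q`.
-/

theorem Nat.succ_choose_two (n : ℕ) : (n + 1).choose 2 = n + n.choose 2 := by
  rw [Nat.choose_succ_succ', Nat.choose_one_right]

namespace Finset

variable {S : Type} {a b c : S}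

theorem exists_mem_mem_not_and {A B : Finset S} (ha : a ∈ A) (hb : b ∈ B)
    (hAB : 2 < A.card + B.card) : ∃ u ∈ A, ∃ v ∈ B, ¬(u = a ∧ v = b) := by
  by_cases hA : 1 < A.card
  · obtain ⟨u, hu, hua⟩ := exists_mem_ne hA a
    exact ⟨u, hu, b, hb, fun h => hua h.1⟩
  · obtain ⟨v, hv, hvb⟩ := exists_mem_ne (by omega : 1 < B.card) b
    exact ⟨a, ha, v, hv, fun h => hvb h.2⟩

variable [DecidableEq S]

theorem ne_of_card_triple_eq_three (h : ({a, b, c} : Finset S).card = 3) :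
    a ≠ b ∧ a ≠ c ∧ b ≠ c := by
  refine ⟨?_, ?_, ?_⟩ <;> rintro rfl <;> simp at h <;>
    exact absurd h (card_le_two.trans_lt (by norm_num)).ne

theorem eq_triple_of_mem {L : Finset S} (hL : L.card = 3) (ha : a ∈ L) (hb : b ∈ L)
    (hc : c ∈ L) (hab : a ≠ b) (hac : a ≠ c) (hbc : b ≠ c) : L = {a, b, c} :=
  (eq_of_subset_of_card_le (by simp [insert_subset_iff, *])
    (by rw [hL, card_eq_three.2 ⟨a, b, c, hab, hac, hbc, rfl⟩])).symm

theorem triple_inter_eq_pair {X : Finset S} (ha : a ∈ X) (hb : b ∈ X) (hc : c ∉ X) :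
    {a, b, c} ∩ X = {a, b} := by
  ext x
  simp only [mem_inter, mem_insert, mem_singleton]
  grind

theorem card_triple_inter_le_one {X : Finset S} (ha : a ∉ X) (hbc : ¬(b ∈ X ∧ c ∈ X)) :
    ({a, b, c} ∩ X).card ≤ 1 := by
  rw [card_le_one]
  simp only [mem_inter, mem_insert, mem_singleton]
  grind

end Finset

namespace PSTS

variable {S : Type}

def Collinear (M : PSTS S) (a b : S) : Prop :=
  ∃ L ∈ M.lines, a ∈ L ∧ b ∈ L

variable {M : PSTS S}

theorem Collinear.symm {a b : S} (h : M.Collinear a b) : M.Collinear b a :=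
  let ⟨L, hL, ha, hb⟩ := h
  ⟨L, hL, hb, ha⟩

theorem ext_lines {M' : PSTS S} (h : M.lines = M'.lines) : M = M' := by
  cases M
  cases M'
  cases h
  rfl

variable [DecidableEq S]

theorem ne_of_triple_mem {a b c : S} (h : {a, b, c} ∈ M.lines) : a ≠ b ∧ a ≠ c ∧ b ≠ c :=
  ne_of_card_triple_eq_three (M.card3 _ h)

theorem exists_eq_triple_of_side {L X : Finset S} {q : S} (hL : L ∈ M.lines)
    (hLX : (L ∩ X).card = 2) (hqL : q ∈ L) (hq : q ∉ X) :
    ∃ a ∈ X, ∃ b ∈ X, a ≠ b ∧ L = {q, a, b} := by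
  obtain ⟨a, b, hab, he⟩ := card_eq_two.1 hLX
  have ha : a ∈ L ∩ X := he ▸ by simp
  have hb : b ∈ L ∩ X := he ▸ by simp
  rw [mem_inter] at ha hb
  exact ⟨a, ha.2, b, hb.2, hab, eq_triple_of_mem (M.card3 L hL) hqL ha.1 hb.1
    (fun h => hq (h ▸ ha.2)) (fun h => hq (h ▸ hb.2)) hab⟩

theorem eq_or_eq_of_two_mem_triple {Lx Ly K : Finset S} {q x y u v : S} (hLx : Lx ∈ M.lines)
    (hqx : q ∈ Lx) (hx : x ∈ Lx) (hLy : Ly ∈ M.lines) (hqy : q ∈ Ly) (hy : y ∈ Ly)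
    (hxy : ¬M.Collinear x y) (hK : K ∈ M.lines) (huv : u ≠ v)
    (hu : u ∈ ({q, x, y} : Finset S)) (hv : v ∈ ({q, x, y} : Finset S)) (huK : u ∈ K)
    (hvK : v ∈ K) : K = Lx ∨ K = Ly := by
  simp only [mem_insert, mem_singleton] at hu hv
  rcases hu with rfl | rfl | rfl <;> rcases hv with rfl | rfl | rfl
  all_goals first
    | exact absurd rfl huv
    | exact Or.inl (M.unique K hK Lx hLx _ _ huv huK hvK ‹_› ‹_›)
    | exact Or.inr (M.unique K hK Ly hLy _ _ huv huK hvK ‹_› ‹_›)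
    | exact (hxy ⟨K, hK, huK, hvK⟩).elim
    | exact (hxy ⟨K, hK, hvK, huK⟩).elim

end PSTS

section

variable {S : Type} [DecidableEq S] {M M' : PSTS S} {X : Finset S}

theorem freelyContains_congr (h : ∀ L, (L ∩ X).card = 2 → (L ∈ M.lines ↔ L ∈ M'.lines)) :
    FreelyContains M X ↔ FreelyContains M' X := by
  have hside : ∀ L, IsSide M X L ↔ IsSide M' X L := fun L =>
    ⟨fun hL => ⟨(h L hL.2).1 hL.1, hL.2⟩, fun hL => ⟨(h L hL.2).2 hL.1, hL.2⟩⟩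
  simp only [FreelyContains, hside]
  refine and_congr_left fun _ => forall₂_congr fun a _ => forall₂_congr fun b _ =>
    imp_congr_right fun _ => ⟨?_, ?_⟩
  · rintro ⟨L, hL, haL, hbL, h2⟩
    exact ⟨L, (h L h2).1 hL, haL, hbL, h2⟩
  · rintro ⟨L, hL, haL, hbL, h2⟩
    exact ⟨L, (h L h2).2 hL, haL, hbL, h2⟩

namespace FreelyContains

theorem collinear (h : FreelyContains M X) {a b : S} (ha : a ∈ X) (hb : b ∈ X) (hab : a ≠ b) :
    M.Collinear a b :=
  let ⟨L, hL, haL, hbL, _⟩ := h.1 a ha b hb hab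
  ⟨L, hL, haL, hbL⟩

variable {n : ℕ}

/-- The `n - 1` edges at `a` lie on distinct sides, which therefore exhaust the `n - 1` lines
through `a`. -/
theorem card_inter_eq_two (h : FreelyContains M X) (hX : X.card = n)
    (hrank : ∀ x, pointRank M x = n - 1) {L : Finset S} {a : S} (hL : L ∈ M.lines)
    (haL : a ∈ L) (ha : a ∈ X) : (L ∩ X).card = 2 := by
  set sides := (M.lines.filter (a ∈ ·)).filter fun K => (K ∩ X).card = 2
  have hcover : X.erase a ⊆ sides.biUnion fun K => (K ∩ X).erase a := by
    intro b hb
    obtain ⟨hba, hbX⟩ := mem_erase.1 hb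
    obtain ⟨K, hK, haK, hbK, hK2⟩ := h.1 a ha b hbX hba.symm
    exact mem_biUnion.2 ⟨K, by simp [sides, hK, haK, hK2], by simp [hba, hbK, hbX]⟩
  have hle : (X.erase a).card ≤ sides.card := by
    refine (card_le_card hcover).trans (card_biUnion_le.trans ?_)
    rw [card_eq_sum_ones]
    refine sum_le_sum fun K hK => ?_
    obtain ⟨⟨-, haK⟩, hK2⟩ := (by simpa [sides] using hK : (K ∈ M.lines ∧ a ∈ K) ∧ _)
    rw [card_erase_of_mem (mem_inter.2 ⟨haK, ha⟩), hK2]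
  have hall : sides.card = (M.lines.filter (a ∈ ·)).card := by
    refine le_antisymm (card_filter_le _ _) ?_
    rw [card_erase_of_mem ha, hX] at hle
    exact (hrank a).le.trans hle
  exact filter_card_eq hall L (mem_filter.2 ⟨hL, haL⟩)

theorem card_inter_le_two (h : FreelyContains M X) (hX : X.card = n)
    (hrank : ∀ x, pointRank M x = n - 1) {L : Finset S} (hL : L ∈ M.lines) :
    (L ∩ X).card ≤ 2 := by
  obtain h0 | ⟨a, ha⟩ := (L ∩ X).eq_empty_or_nonempty
  · simp [h0]
  · rw [mem_inter] at ha
    exact (h.card_inter_eq_two hX hrank hL ha.1 ha.2).le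

theorem mem_or_mem (h : FreelyContains M X) (hX : X.card = n)
    (hrank : ∀ x, pointRank M x = n - 1) {x y z : S} (hL : {x, y, z} ∈ M.lines) (hx : x ∈ X) :
    y ∈ X ∨ z ∈ X := by
  by_contra! hyz
  have hsub : {x, y, z} ∩ X ⊆ {x} := by
    intro w hw
    simp only [mem_inter, mem_insert, mem_singleton] at hw ⊢
    grind
  have := card_le_card hsub
  rw [h.card_inter_eq_two hX hrank hL (by simp) hx, card_singleton] at this
  omega

/-- There are at least `C(n, 2)` sides, each with exactly one point off `X`, no two sharing it,
and only `C(n, 2)` points off `X`. -/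
theorem exists_side_through [Fintype S] (h : FreelyContains M X) (hX : X.card = n)
    (hS : Fintype.card S = (n + 1).choose 2) {z : S} (hz : z ∉ X) :
    ∃ L ∈ M.lines, z ∈ L ∧ (L ∩ X).card = 2 := by
  by_contra! hno
  set sides := M.lines.filter fun L => (L ∩ X).card = 2
  have hedges : n.choose 2 ≤ sides.card := by
    rw [← hX, ← card_powersetCard]
    refine card_le_card_of_surjOn (· ∩ X) fun e he => ?_
    obtain ⟨heX, he2⟩ := mem_powersetCard.1 (mem_coe.1 he)
    obtain ⟨a, b, hab, rfl⟩ := card_eq_two.1 he2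
    have ha : a ∈ X := heX (by simp)
    have hb : b ∈ X := heX (by simp)
    obtain ⟨L, hL, haL, hbL, hL2⟩ := h.1 a ha b hb hab
    refine ⟨L, mem_filter.2 ⟨hL, hL2⟩, (eq_of_subset_of_card_le ?_ ?_).symm⟩
    · simp [insert_subset_iff, haL, hbL, ha, hb]
    · rw [hL2, card_pair hab]
  have houtside : sides.card ≤ (Xᶜ.erase z).card := by
    calc sides.card = ∑ L ∈ sides, (L \ X).card := by
          rw [card_eq_sum_ones]
          refine sum_congr rfl fun L hL => ?_
          have := card_sdiff_add_card_inter L X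
          rw [(mem_filter.1 hL).2, M.card3 L (mem_filter.1 hL).1] at this
          omega
      _ = (sides.biUnion (· \ X)).card := by
          refine (card_biUnion fun L hL K hK hne => disjoint_left.2 fun r hrL hrK => ?_).symm
          rw [mem_coe, mem_filter] at hL hK
          rw [mem_sdiff] at hrL hrK
          exact hrL.2 (h.2 L K hL hK hne r hrL.1 hrK.1)
      _ ≤ (Xᶜ.erase z).card := by
          refine card_le_card (biUnion_subset.2 fun L hL r hr => ?_)
          rw [mem_sdiff] at hr
          refine mem_erase.2 ⟨?_, mem_compl.2 hr.2⟩
          rintro rfl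
          exact hno L (mem_filter.1 hL).1 hr.1 (mem_filter.1 hL).2
  have hcompl : Xᶜ.card = n.choose 2 := by
    rw [card_compl, hX, hS, Nat.succ_choose_two]
    omega
  rw [card_erase_of_mem (mem_compl.2 hz), hcompl] at houtside
  have : 0 < n.choose 2 := hcompl ▸ card_pos.2 ⟨z, mem_compl.2 hz⟩
  omega

end FreelyContains

end

section

variable {S : Type} [DecidableEq S]

/-- Lines `{q, a₁, b₁}` and `{q, a₂, b₂}` of `M` which may be replaced by `{q, a₁, b₂}` and
`{q, b₁, a₂}`. -/
structure LineSwitch (M : PSTS S) where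
  q : S
  a₁ : S
  b₁ : S
  a₂ : S
  b₂ : S
  oldLine₁_mem : {q, a₁, b₁} ∈ M.lines
  oldLine₂_mem : {q, a₂, b₂} ∈ M.lines
  not_collinear_a₁_b₂ : ¬M.Collinear a₁ b₂
  not_collinear_b₁_a₂ : ¬M.Collinear b₁ a₂

namespace LineSwitch

variable {M : PSTS S} (s : LineSwitch M)

abbrev oldLine₁ : Finset S := {s.q, s.a₁, s.b₁}

abbrev oldLine₂ : Finset S := {s.q, s.a₂, s.b₂}

abbrev newLine₁ : Finset S := {s.q, s.a₁, s.b₂}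

abbrev newLine₂ : Finset S := {s.q, s.b₁, s.a₂}

def lines : Finset (Finset S) :=
  insert s.newLine₁ (insert s.newLine₂ ((M.lines.erase s.oldLine₁).erase s.oldLine₂))

theorem mem_lines {L : Finset S} :
    L ∈ s.lines ↔ L = s.newLine₁ ∨ L = s.newLine₂ ∨
      (L ∈ M.lines ∧ L ≠ s.oldLine₁ ∧ L ≠ s.oldLine₂) := by
  simp only [lines, mem_insert, mem_erase]
  tauto

theorem q_ne_a₁ : s.q ≠ s.a₁ := (PSTS.ne_of_triple_mem s.oldLine₁_mem).1

theorem q_ne_b₁ : s.q ≠ s.b₁ := (PSTS.ne_of_triple_mem s.oldLine₁_mem).2.1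

theorem a₁_ne_b₁ : s.a₁ ≠ s.b₁ := (PSTS.ne_of_triple_mem s.oldLine₁_mem).2.2

theorem q_ne_a₂ : s.q ≠ s.a₂ := (PSTS.ne_of_triple_mem s.oldLine₂_mem).1

theorem q_ne_b₂ : s.q ≠ s.b₂ := (PSTS.ne_of_triple_mem s.oldLine₂_mem).2.1

theorem a₂_ne_b₂ : s.a₂ ≠ s.b₂ := (PSTS.ne_of_triple_mem s.oldLine₂_mem).2.2

theorem a₁_ne_b₂ : s.a₁ ≠ s.b₂ := fun h =>
  s.not_collinear_a₁_b₂ ⟨_, s.oldLine₁_mem, by simp, by simp [← h]⟩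

theorem b₁_ne_a₂ : s.b₁ ≠ s.a₂ := fun h =>
  s.not_collinear_b₁_a₂ ⟨_, s.oldLine₁_mem, by simp, by simp [← h]⟩

theorem oldLine₁_ne_oldLine₂ : s.oldLine₁ ≠ s.oldLine₂ := fun h =>
  s.not_collinear_a₁_b₂ ⟨_, s.oldLine₂_mem, show s.a₁ ∈ s.oldLine₂ by rw [← h]; simp, by simp⟩

theorem a₁_ne_a₂ : s.a₁ ≠ s.a₂ := fun h => s.oldLine₁_ne_oldLine₂ <|
  M.unique _ s.oldLine₁_mem _ s.oldLine₂_mem _ _ s.q_ne_a₁ (by simp) (by simp) (by simp)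
    (by simp [h])

theorem b₁_ne_b₂ : s.b₁ ≠ s.b₂ := fun h => s.oldLine₁_ne_oldLine₂ <|
  M.unique _ s.oldLine₁_mem _ s.oldLine₂_mem _ _ s.q_ne_b₁ (by simp) (by simp) (by simp)
    (by simp [h])

theorem newLine₁_notMem : s.newLine₁ ∉ M.lines := fun h =>
  s.not_collinear_a₁_b₂ ⟨_, h, by simp, by simp⟩

theorem newLine₂_notMem : s.newLine₂ ∉ M.lines := fun h =>
  s.not_collinear_b₁_a₂ ⟨_, h, by simp, by simp⟩

theorem eq_q_of_mem_newLine {x : S} (h₁ : x ∈ s.newLine₁) (h₂ : x ∈ s.newLine₂) : x = s.q := by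
  have := s.a₁_ne_b₁
  have := s.a₁_ne_a₂
  have := s.b₁_ne_b₂
  have := s.a₂_ne_b₂
  simp only [mem_insert, mem_singleton] at h₁ h₂
  grind

theorem newLine₁_ne_newLine₂ : s.newLine₁ ≠ s.newLine₂ := fun h =>
  s.q_ne_a₁ (s.eq_q_of_mem_newLine (by simp) (h ▸ (by simp : s.a₁ ∈ s.newLine₁))).symm

theorem eq_oldLine_of_two_mem_newLine₁ {K : Finset S} (hK : K ∈ M.lines) {u v : S}
    (huv : u ≠ v) (hu : u ∈ s.newLine₁) (hv : v ∈ s.newLine₁) (huK : u ∈ K) (hvK : v ∈ K) :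
    K = s.oldLine₁ ∨ K = s.oldLine₂ :=
  PSTS.eq_or_eq_of_two_mem_triple s.oldLine₁_mem (by simp) (by simp) s.oldLine₂_mem (by simp)
    (by simp) s.not_collinear_a₁_b₂ hK huv hu hv huK hvK

theorem eq_oldLine_of_two_mem_newLine₂ {K : Finset S} (hK : K ∈ M.lines) {u v : S}
    (huv : u ≠ v) (hu : u ∈ s.newLine₂) (hv : v ∈ s.newLine₂) (huK : u ∈ K) (hvK : v ∈ K) :
    K = s.oldLine₁ ∨ K = s.oldLine₂ :=
  PSTS.eq_or_eq_of_two_mem_triple s.oldLine₁_mem (by simp) (by simp) s.oldLine₂_mem (by simp)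
    (by simp) s.not_collinear_b₁_a₂ hK huv hu hv huK hvK

def switched : PSTS S where
  lines := s.lines
  card3 L hL := by
    rcases s.mem_lines.1 hL with rfl | rfl | ⟨hL, -, -⟩
    · exact card_eq_three.2 ⟨_, _, _, s.q_ne_a₁, s.q_ne_b₂, s.a₁_ne_b₂, rfl⟩
    · exact card_eq_three.2 ⟨_, _, _, s.q_ne_b₁, s.q_ne_a₂, s.b₁_ne_a₂, rfl⟩
    · exact M.card3 L hL
  unique L₁ h₁ L₂ h₂ u v huv hu₁ hv₁ hu₂ hv₂ := by
    rcases s.mem_lines.1 h₁ with rfl | rfl | ⟨h₁, h₁₁, h₁₂⟩ <;>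
      rcases s.mem_lines.1 h₂ with rfl | rfl | ⟨h₂, h₂₁, h₂₂⟩
    all_goals first
      | rfl
      | exact M.unique _ h₁ _ h₂ u v huv hu₁ hv₁ hu₂ hv₂
      | exact absurd ((s.eq_q_of_mem_newLine hu₁ hu₂).trans
          (s.eq_q_of_mem_newLine hv₁ hv₂).symm) huv
      | exact absurd ((s.eq_q_of_mem_newLine hu₂ hu₁).trans
          (s.eq_q_of_mem_newLine hv₂ hv₁).symm) huv
      | exact ((s.eq_oldLine_of_two_mem_newLine₁ h₂ huv hu₁ hv₁ hu₂ hv₂).elim h₂₁ h₂₂).elim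
      | exact ((s.eq_oldLine_of_two_mem_newLine₂ h₂ huv hu₁ hv₁ hu₂ hv₂).elim h₂₁ h₂₂).elim
      | exact ((s.eq_oldLine_of_two_mem_newLine₁ h₁ huv hu₂ hv₂ hu₁ hv₁).elim h₁₁ h₁₂).elim
      | exact ((s.eq_oldLine_of_two_mem_newLine₂ h₁ huv hu₂ hv₂ hu₁ hv₁).elim h₁₁ h₁₂).elim

theorem switched_lines : s.switched.lines = s.lines := rfl

theorem card_lines : s.lines.card = M.lines.card := by
  have hold₂ : s.oldLine₂ ∈ M.lines.erase s.oldLine₁ :=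
    mem_erase.2 ⟨s.oldLine₁_ne_oldLine₂.symm, s.oldLine₂_mem⟩
  have h₂ := card_erase_add_one hold₂
  have h₁ := card_erase_add_one (show s.oldLine₁ ∈ M.lines from s.oldLine₁_mem)
  rw [lines, card_insert_of_notMem, card_insert_of_notMem]
  · omega
  · exact fun h => s.newLine₂_notMem (mem_of_mem_erase (mem_of_mem_erase h))
  · rw [mem_insert, not_or]
    exact ⟨s.newLine₁_ne_newLine₂,
      fun h => s.newLine₁_notMem (mem_of_mem_erase (mem_of_mem_erase h))⟩

theorem pointRank_switched (x : S) : pointRank s.switched x = pointRank M x := by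
  have hindicator :
      (if x ∈ s.newLine₁ then 1 else 0) + (if x ∈ s.newLine₂ then 1 else 0) =
        (if x ∈ s.oldLine₁ then 1 else 0) + (if x ∈ s.oldLine₂ then 1 else 0) := by
    have := s.q_ne_a₁; have := s.q_ne_b₁; have := s.q_ne_a₂; have := s.q_ne_b₂
    have := s.a₁_ne_b₁; have := s.a₂_ne_b₂; have := s.a₁_ne_a₂; have := s.a₁_ne_b₂
    have := s.b₁_ne_a₂; have := s.b₁_ne_b₂
    simp only [mem_insert, mem_singleton]
    split_ifs <;> grind
  have hold₂ : s.oldLine₂ ∈ M.lines.erase s.oldLine₁ :=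
    mem_erase.2 ⟨s.oldLine₁_ne_oldLine₂.symm, s.oldLine₂_mem⟩
  simp only [pointRank, switched_lines, card_filter, lines]
  rw [sum_insert, sum_insert,
    ← add_sum_erase M.lines _ (show s.oldLine₁ ∈ M.lines from s.oldLine₁_mem),
    ← add_sum_erase _ _ hold₂]
  · omega
  · exact fun h => s.newLine₂_notMem (mem_of_mem_erase (mem_of_mem_erase h))
  · rw [mem_insert, not_or]
    exact ⟨s.newLine₁_ne_newLine₂,
      fun h => s.newLine₁_notMem (mem_of_mem_erase (mem_of_mem_erase h))⟩

def swap : LineSwitch M where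
  q := s.q
  a₁ := s.b₁
  b₁ := s.a₁
  a₂ := s.b₂
  b₂ := s.a₂
  oldLine₁_mem := by rw [pair_comm]; exact s.oldLine₁_mem
  oldLine₂_mem := by rw [pair_comm]; exact s.oldLine₂_mem
  not_collinear_a₁_b₂ := s.not_collinear_b₁_a₂
  not_collinear_b₁_a₂ := s.not_collinear_a₁_b₂

theorem swap_switched : s.swap.switched = s.switched := by
  refine PSTS.ext_lines ?_
  show insert {s.q, s.b₁, s.a₂} (insert {s.q, s.a₁, s.b₂}
    ((M.lines.erase {s.q, s.b₁, s.a₁}).erase {s.q, s.b₂, s.a₂})) = s.lines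
  rw [pair_comm s.b₁ s.a₁, pair_comm s.b₂ s.a₂]
  exact insert_comm _ _ _

theorem not_collinear_switched_a₁_b₁ : ¬s.switched.Collinear s.a₁ s.b₁ := by
  rintro ⟨L, hL, ha, hb⟩
  rcases s.mem_lines.1 hL with rfl | rfl | ⟨hL, h₁, -⟩
  · have := s.q_ne_b₁; have := s.a₁_ne_b₁; have := s.b₁_ne_b₂
    simp only [mem_insert, mem_singleton] at hb
    grind
  · have := s.q_ne_a₁; have := s.a₁_ne_b₁; have := s.a₁_ne_a₂
    simp only [mem_insert, mem_singleton] at ha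
    grind
  · exact h₁ (M.unique _ hL _ s.oldLine₁_mem _ _ s.a₁_ne_b₁ ha hb (by simp) (by simp))

theorem not_collinear_switched_a₂_b₂ : ¬s.switched.Collinear s.a₂ s.b₂ := by
  rintro ⟨L, hL, ha, hb⟩
  rcases s.mem_lines.1 hL with rfl | rfl | ⟨hL, -, h₂⟩
  · have := s.q_ne_a₂; have := s.a₁_ne_a₂; have := s.a₂_ne_b₂
    simp only [mem_insert, mem_singleton] at ha
    grind
  · have := s.q_ne_b₂; have := s.b₁_ne_b₂; have := s.a₂_ne_b₂
    simp only [mem_insert, mem_singleton] at hb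
    grind
  · exact h₂ (M.unique _ hL _ s.oldLine₂_mem _ _ s.a₂_ne_b₂ ha hb (by simp) (by simp))

theorem freelyContains_switched_iff {X : Finset S} (hq : s.q ∉ X)
    (h₁ : ¬(s.a₁ ∈ X ∧ s.b₁ ∈ X)) (h₂ : ¬(s.a₂ ∈ X ∧ s.b₂ ∈ X))
    (h₃ : ¬(s.a₁ ∈ X ∧ s.b₂ ∈ X)) (h₄ : ¬(s.b₁ ∈ X ∧ s.a₂ ∈ X)) :
    FreelyContains s.switched X ↔ FreelyContains M X := by
  refine freelyContains_congr fun L hL => ?_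
  have hne : ∀ {a b : S}, ¬(a ∈ X ∧ b ∈ X) → ({s.q, a, b} ∩ X).card ≠ 2 := fun h =>
    ((card_triple_inter_le_one hq h).trans_lt one_lt_two).ne
  rw [switched_lines, mem_lines]
  constructor
  · rintro (rfl | rfl | ⟨h, -, -⟩)
    exacts [(hne h₃ hL).elim, (hne h₄ hL).elim, h]
  · exact fun h => Or.inr (Or.inr ⟨h, fun e => hne h₁ (by subst e; exact hL),
      fun e => hne h₂ (by subst e; exact hL)⟩)

/-- The old and the new lines through `q` meet `X` in the same edges `{q, a₁}` and `{q, a₂}`, and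
a side of `X` in `M` through `b₁` other than `{q, a₁, b₁}` would meet the side `{q, b₁, a₂}` of the
switched configuration outside `X`. -/
theorem freelyContains_of_switched {X : Finset S} (hq : s.q ∈ X) (ha₁ : s.a₁ ∈ X)
    (ha₂ : s.a₂ ∈ X) (hb₁ : s.b₁ ∉ X) (hb₂ : s.b₂ ∉ X) (h : FreelyContains s.switched X) :
    FreelyContains M X := by
  have hold₁ : s.oldLine₁ ∩ X = {s.q, s.a₁} := triple_inter_eq_pair hq ha₁ hb₁
  have hold₂ : s.oldLine₂ ∩ X = {s.q, s.a₂} := triple_inter_eq_pair hq ha₂ hb₂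
  have hnew₁ : s.newLine₁ ∩ X = {s.q, s.a₁} := triple_inter_eq_pair hq ha₁ hb₂
  have hnew₂ : s.newLine₂ ∩ X = {s.q, s.a₂} := by
    rw [newLine₂, pair_comm]
    exact triple_inter_eq_pair hq ha₂ hb₁
  have hmem : ∀ {K}, K ∈ M.lines → K ≠ s.oldLine₁ → K ≠ s.oldLine₂ → K ∈ s.lines :=
    fun hK h₁ h₂ => s.mem_lines.2 (Or.inr (Or.inr ⟨hK, h₁, h₂⟩))
  have hb₁_side : ∀ K, IsSide M X K → s.b₁ ∈ K → K = s.oldLine₁ := by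
    intro K hK hb₁K
    by_contra hne
    have hne₂ : K ≠ s.oldLine₂ := by
      rintro rfl
      have := s.q_ne_b₁; have := s.b₁_ne_a₂; have := s.b₁_ne_b₂
      simp only [mem_insert, mem_singleton] at hb₁K
      grind
    exact hb₁ (h.2 K s.newLine₂ ⟨hmem hK.1 hne hne₂, hK.2⟩
      ⟨s.mem_lines.2 (Or.inr (Or.inl rfl)), by rw [hnew₂, card_pair s.q_ne_a₂]⟩
      (fun e => s.newLine₂_notMem (e ▸ hK.1)) _ hb₁K (by simp))
  have hb₂_side : ∀ K, IsSide M X K → s.b₂ ∈ K → K = s.oldLine₂ := by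
    intro K hK hb₂K
    by_contra hne
    have hne₁ : K ≠ s.oldLine₁ := by
      rintro rfl
      have := s.q_ne_b₂; have := s.a₁_ne_b₂; have := s.b₁_ne_b₂
      simp only [mem_insert, mem_singleton] at hb₂K
      grind
    exact hb₂ (h.2 K s.newLine₁ ⟨hmem hK.1 hne₁ hne, hK.2⟩
      ⟨s.mem_lines.2 (Or.inl rfl), by rw [hnew₁, card_pair s.q_ne_a₁]⟩
      (fun e => s.newLine₁_notMem (e ▸ hK.1)) _ hb₂K (by simp))
  refine ⟨fun u hu v hv huv => ?_, fun K₁ K₂ hK₁ hK₂ hne r hr₁ hr₂ => ?_⟩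
  · obtain ⟨L, hL, huL, hvL, hL2⟩ := h.1 u hu v hv huv
    rcases s.mem_lines.1 hL with rfl | rfl | ⟨hL, -, -⟩
    · have : u ∈ s.oldLine₁ ∩ X ∧ v ∈ s.oldLine₁ ∩ X := by
        rw [hold₁, ← hnew₁]
        exact ⟨mem_inter.2 ⟨huL, hu⟩, mem_inter.2 ⟨hvL, hv⟩⟩
      exact ⟨_, s.oldLine₁_mem, (mem_inter.1 this.1).1, (mem_inter.1 this.2).1,
        by rw [hold₁, card_pair s.q_ne_a₁]⟩
    · have : u ∈ s.oldLine₂ ∩ X ∧ v ∈ s.oldLine₂ ∩ X := by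
        rw [hold₂, ← hnew₂]
        exact ⟨mem_inter.2 ⟨huL, hu⟩, mem_inter.2 ⟨hvL, hv⟩⟩
      exact ⟨_, s.oldLine₂_mem, (mem_inter.1 this.1).1, (mem_inter.1 this.2).1,
        by rw [hold₂, card_pair s.q_ne_a₂]⟩
    · exact ⟨L, hL, huL, hvL, hL2⟩
  · by_contra hr
    have hfix : ∀ K K', IsSide M X K' → r ∈ K → r ∈ K' →
        K = s.oldLine₁ ∨ K = s.oldLine₂ → K' = K := by
      rintro K K' hK' hrK hrK' (rfl | rfl) <;> simp only [mem_insert, mem_singleton] at hrK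
      · refine hb₁_side K' hK' ?_
        rcases hrK with rfl | rfl | rfl
        exacts [(hr hq).elim, (hr ha₁).elim, hrK']
      · refine hb₂_side K' hK' ?_
        rcases hrK with rfl | rfl | rfl
        exacts [(hr hq).elim, (hr ha₂).elim, hrK']
    by_cases h₁ : K₁ = s.oldLine₁ ∨ K₁ = s.oldLine₂
    · exact hne (hfix K₁ K₂ hK₂ hr₁ hr₂ h₁).symm
    by_cases h₂ : K₂ = s.oldLine₁ ∨ K₂ = s.oldLine₂
    · exact hne (hfix K₂ K₁ hK₁ hr₂ hr₁ h₂)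
    rw [not_or] at h₁ h₂
    exact hr (h.2 K₁ K₂ ⟨hmem hK₁.1 h₁.1 h₁.2, hK₁.2⟩ ⟨hmem hK₂.1 h₂.1 h₂.2, hK₂.2⟩ hne r hr₁ hr₂)

end LineSwitch

end

section

variable {S : Type} [DecidableEq S] {M : PSTS S} {n : ℕ}

/-- A side of `X₁` through a vertex of `X₂ \ X₁` carries a second vertex of `X₂`, which lies in
`X₁`. Two common vertices `a, b` would make the sides of `X₁` joining them to a vertex of
`X₁ \ X₂` two sides of `X₂` meeting outside `X₂`. -/
theorem exists_inter_eq_singleton [Fintype S] (hS : Fintype.card S = (n + 1).choose 2)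
    (hrank : ∀ x, pointRank M x = n - 1) {X₁ X₂ : Finset S} (h₁ : FreelyContains M X₁)
    (h₂ : FreelyContains M X₂) (hc₁ : X₁.card = n) (hc₂ : X₂.card = n) (hne : X₁ ≠ X₂) :
    ∃ p, X₁ ∩ X₂ = {p} := by
  have hdiff : ∀ {A B : Finset S}, A.card = B.card → A ≠ B → ∃ x ∈ B, x ∉ A := fun hAB hne =>
    not_subset.1 fun hsub => hne (eq_of_subset_of_card_le hsub hAB.le).symm
  obtain ⟨x, hx₂, hx₁⟩ := hdiff (hc₁.trans hc₂.symm) hne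
  obtain ⟨T, hT, hxT, hT₁⟩ := h₁.exists_side_through hc₁ hS hx₁
  obtain ⟨u, hu, v, hv, -, rfl⟩ := PSTS.exists_eq_triple_of_side hT hT₁ hxT hx₁
  have hnonempty : (X₁ ∩ X₂).Nonempty := by
    rcases h₂.mem_or_mem hc₂ hrank hT hx₂ with h | h
    exacts [⟨u, mem_inter.2 ⟨hu, h⟩⟩, ⟨v, mem_inter.2 ⟨hv, h⟩⟩]
  refine card_eq_one.1 (le_antisymm (card_le_one.2 fun a ha b hb => ?_) (card_pos.2 hnonempty))
  rw [mem_inter] at ha hb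
  by_contra hab
  obtain ⟨y, hy₁, hy₂⟩ := hdiff (hc₂.trans hc₁.symm) hne.symm
  have hay : a ≠ y := fun h => hy₂ (h ▸ ha.2)
  have hby : b ≠ y := fun h => hy₂ (h ▸ hb.2)
  obtain ⟨La, hLa, haLa, hyLa, -⟩ := h₁.1 a ha.1 y hy₁ hay
  obtain ⟨Lb, hLb, hbLb, hyLb, -⟩ := h₁.1 b hb.1 y hy₁ hby
  have hLab : La ≠ Lb := by
    rintro rfl
    exact (h₁.card_inter_le_two hc₁ hrank hLa).not_gt <| two_lt_card.2
      ⟨a, mem_inter.2 ⟨haLa, ha.1⟩, b, mem_inter.2 ⟨hbLb, hb.1⟩, y, mem_inter.2 ⟨hyLa, hy₁⟩,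
        hab, hay, hby⟩
  exact hy₂ (h₂.2 La Lb ⟨hLa, h₂.card_inter_eq_two hc₂ hrank hLa haLa ha.2⟩
    ⟨hLb, h₂.card_inter_eq_two hc₂ hrank hLb hbLb hb.2⟩ hLab y hyLa hyLb)

structure IsFreePair (M : PSTS S) (n : ℕ) (X₁ X₂ : Finset S) (p : S) : Prop where
  pointRank_eq : ∀ x, pointRank M x = n - 1
  card_left : X₁.card = n
  card_right : X₂.card = n
  free_left : FreelyContains M X₁
  free_right : FreelyContains M X₂
  inter_eq : X₁ ∩ X₂ = {p}

namespace IsFreePair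

variable {X₁ X₂ : Finset S} {p : S}

theorem symm (hP : IsFreePair M n X₁ X₂ p) : IsFreePair M n X₂ X₁ p :=
  ⟨hP.pointRank_eq, hP.card_right, hP.card_left, hP.free_right, hP.free_left,
    inter_comm X₁ X₂ ▸ hP.inter_eq⟩

theorem eq_of_mem (hP : IsFreePair M n X₁ X₂ p) {x : S} (h₁ : x ∈ X₁) (h₂ : x ∈ X₂) : x = p :=
  mem_singleton.1 (hP.inter_eq ▸ mem_inter.2 ⟨h₁, h₂⟩)

theorem apex_mem_left (hP : IsFreePair M n X₁ X₂ p) : p ∈ X₁ :=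
  (mem_inter.1 (hP.inter_eq ▸ mem_singleton_self p)).1

theorem notMem_right (hP : IsFreePair M n X₁ X₂ p) {x : S} (hx : x ∈ X₁.erase p) : x ∉ X₂ :=
  fun h => (mem_erase.1 hx).1 (hP.eq_of_mem (mem_erase.1 hx).2 h)

theorem apex_mem (hP : IsFreePair M n X₁ X₂ p) {L : Finset S} (hL : L ∈ M.lines) {x y : S}
    (hxL : x ∈ L) (hx : x ∈ X₁) (hyL : y ∈ L) (hy : y ∈ X₂) : p ∈ L := by
  have h₁ := hP.free_left.card_inter_eq_two hP.card_left hP.pointRank_eq hL hxL hx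
  have h₂ := hP.free_right.card_inter_eq_two hP.card_right hP.pointRank_eq hL hyL hy
  have hunion := (card_le_card (union_subset (inter_subset_left (s₂ := X₁))
    (inter_subset_left (s₂ := X₂)))).trans (M.card3 L hL).le
  obtain ⟨r, hr⟩ : ((L ∩ X₁) ∩ (L ∩ X₂)).Nonempty := by
    rw [← card_pos]
    have := card_union_add_card_inter (L ∩ X₁) (L ∩ X₂)
    omega
  simp only [mem_inter] at hr
  exact hP.eq_of_mem hr.1.2 hr.2.2 ▸ hr.1.1

theorem exists_eq_triple_of_apex_mem (hP : IsFreePair M n X₁ X₂ p) {L : Finset S}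
    (hL : L ∈ M.lines) (hpL : p ∈ L) : ∃ x ∈ X₁.erase p, ∃ y ∈ X₂.erase p, L = {p, x, y} := by
  have h₁ := hP.free_left.card_inter_eq_two hP.card_left hP.pointRank_eq hL hpL hP.apex_mem_left
  have h₂ := hP.free_right.card_inter_eq_two hP.card_right hP.pointRank_eq hL hpL
    hP.symm.apex_mem_left
  obtain ⟨x, hx, hxp⟩ := exists_mem_ne (by omega) p (s := L ∩ X₁)
  obtain ⟨y, hy, hyp⟩ := exists_mem_ne (by omega) p (s := L ∩ X₂)
  rw [mem_inter] at hx hy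
  have hx' : x ∈ X₁.erase p := mem_erase.2 ⟨hxp, hx.2⟩
  exact ⟨x, hx', y, mem_erase.2 ⟨hyp, hy.2⟩, eq_triple_of_mem (M.card3 L hL) hpL hx.1 hy.1
    hxp.symm hyp.symm fun h => hP.notMem_right hx' (h ▸ hy.2)⟩

theorem subset_union_of_apex_mem (hP : IsFreePair M n X₁ X₂ p) {L : Finset S}
    (hL : L ∈ M.lines) (hpL : p ∈ L) : L ⊆ X₁ ∪ X₂ := by
  obtain ⟨x, hx, y, hy, rfl⟩ := hP.exists_eq_triple_of_apex_mem hL hpL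
  simp [insert_subset_iff, hP.apex_mem_left, (mem_erase.1 hx).2, (mem_erase.1 hy).2]

theorem exists_partner (hP : IsFreePair M n X₁ X₂ p) {x : S} (hx : x ∈ X₁.erase p) :
    ∃ y ∈ X₂.erase p, {p, x, y} ∈ M.lines := by
  obtain ⟨hxp, hx₁⟩ := mem_erase.1 hx
  obtain ⟨L, hL, hpL, hxL, -⟩ := hP.free_left.1 p hP.apex_mem_left x hx₁ hxp.symm
  obtain ⟨x', -, y, hy, rfl⟩ := hP.exists_eq_triple_of_apex_mem hL hpL
  simp only [mem_insert, mem_singleton] at hxL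
  rcases hxL with rfl | rfl | rfl
  · exact (hxp rfl).elim
  · exact ⟨y, hy, hL⟩
  · exact (hP.notMem_right hx (mem_erase.1 hy).2).elim

theorem eq_of_collinear (hP : IsFreePair M n X₁ X₂ p) {x y y' : S} (hx : x ∈ X₁.erase p)
    (hy : y ∈ X₂.erase p) (hy' : y' ∈ X₂.erase p) (h : M.Collinear x y)
    (h' : M.Collinear x y') : y = y' := by
  obtain ⟨L, hL, hxL, hyL⟩ := h
  obtain ⟨L', hL', hxL', hyL'⟩ := h'
  rw [mem_erase] at hx hy hy'
  have hpL := hP.apex_mem hL hxL hx.2 hyL hy.2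
  obtain rfl : L = L' := M.unique L hL L' hL' p x hx.1.symm hpL hxL
    (hP.apex_mem hL' hxL' hx.2 hyL' hy'.2) hxL'
  by_contra hne
  exact (hP.free_right.card_inter_le_two hP.card_right hP.pointRank_eq hL).not_gt <|
    two_lt_card.2 ⟨p, mem_inter.2 ⟨hpL, hP.symm.apex_mem_left⟩, y, mem_inter.2 ⟨hyL, hy.2⟩,
      y', mem_inter.2 ⟨hyL', hy'.2⟩, hy.1.symm, hy'.1.symm, hne⟩

theorem not_collinear_labelling (hP : IsFreePair M n X₁ X₂ p) {a b c d : S}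
    (ha : a ∈ X₁.erase p) (hb : b ∈ X₁.erase p) (hab : a ≠ b) (hc : c ∈ X₂.erase p)
    (hd : d ∈ X₂.erase p) (hcd : c ≠ d) :
    (¬M.Collinear a d ∧ ¬M.Collinear b c) ∨ (¬M.Collinear a c ∧ ¬M.Collinear b d) := by
  have hac_ad : M.Collinear a c → M.Collinear a d → False := fun h h' =>
    hcd (hP.eq_of_collinear ha hc hd h h')
  have hbc_bd : M.Collinear b c → M.Collinear b d → False := fun h h' =>
    hcd (hP.eq_of_collinear hb hc hd h h')
  have hac_bc : M.Collinear a c → M.Collinear b c → False := fun h h' =>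
    hab (hP.symm.eq_of_collinear hc ha hb h.symm h'.symm)
  have had_bd : M.Collinear a d → M.Collinear b d → False := fun h h' =>
    hab (hP.symm.eq_of_collinear hd ha hb h.symm h'.symm)
  tauto

end IsFreePair

structure LineSwitch.SwitchesSides (s : LineSwitch M) (X₁ X₂ : Finset S) (p : S) : Prop where
  q_notMem_left : s.q ∉ X₁
  q_notMem_right : s.q ∉ X₂
  a₁_mem : s.a₁ ∈ X₁.erase p
  b₁_mem : s.b₁ ∈ X₁.erase p
  a₂_mem : s.a₂ ∈ X₂.erase p
  b₂_mem : s.b₂ ∈ X₂.erase p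

namespace LineSwitch.SwitchesSides

variable {s : LineSwitch M} {X₁ X₂ : Finset S} {p : S}

theorem swap (hs : s.SwitchesSides X₁ X₂ p) : s.swap.SwitchesSides X₁ X₂ p :=
  ⟨hs.q_notMem_left, hs.q_notMem_right, hs.b₁_mem, hs.a₁_mem, hs.b₂_mem, hs.a₂_mem⟩

theorem mem_lines_iff_of_apex_mem (hs : s.SwitchesSides X₁ X₂ p) (hp : p ∈ X₁) {L : Finset S}
    (hpL : p ∈ L) : L ∈ s.lines ↔ L ∈ M.lines := by
  have hpq : p ≠ s.q := fun h => hs.q_notMem_left (h ▸ hp)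
  have := (mem_erase.1 hs.a₁_mem).1; have := (mem_erase.1 hs.b₁_mem).1
  have := (mem_erase.1 hs.a₂_mem).1; have := (mem_erase.1 hs.b₂_mem).1
  rw [s.mem_lines]
  constructor
  · rintro (rfl | rfl | ⟨h, -, -⟩)
    · simp only [mem_insert, mem_singleton] at hpL
      grind
    · simp only [mem_insert, mem_singleton] at hpL
      grind
    · exact h
  · refine fun h => Or.inr (Or.inr ⟨h, ?_, ?_⟩) <;> rintro rfl <;>
      simp only [mem_insert, mem_singleton] at hpL <;> grind

end LineSwitch.SwitchesSides

namespace IsFreePair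

variable {X₁ X₂ : Finset S} {p : S}

theorem exists_lineSwitch [Fintype S] (hP : IsFreePair M n X₁ X₂ p)
    (hS : Fintype.card S = (n + 1).choose 2) (hn : 3 ≤ n) :
    ∃ s : LineSwitch M, s.SwitchesSides X₁ X₂ p := by
  have hcard : (X₁ ∪ X₂).card < (univ : Finset S).card := by
    have hunion := card_union_add_card_inter X₁ X₂
    have hchoose : n ≤ n.choose 2 := by
      rw [Nat.choose_two_right, Nat.le_div_iff_mul_le two_pos]
      exact Nat.mul_le_mul_left n (by omega)
    rw [hP.inter_eq, card_singleton, hP.card_left, hP.card_right] at hunion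
    rw [card_univ, hS, Nat.succ_choose_two]
    omega
  obtain ⟨q, -, hq⟩ := exists_mem_notMem_of_card_lt_card hcard
  have hpq : ∀ {L}, L ∈ M.lines → q ∈ L → p ∉ L := fun hL hqL hpL =>
    hq (hP.subset_union_of_apex_mem hL hpL hqL)
  rw [mem_union, not_or] at hq
  obtain ⟨L₁, hL₁, hqL₁, hL₁X⟩ := hP.free_left.exists_side_through hP.card_left hS hq.1
  obtain ⟨a₁, ha₁, b₁, hb₁, hab₁, rfl⟩ := PSTS.exists_eq_triple_of_side hL₁ hL₁X hqL₁ hq.1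
  obtain ⟨L₂, hL₂, hqL₂, hL₂X⟩ := hP.free_right.exists_side_through hP.card_right hS hq.2
  obtain ⟨c, hc, d, hd, hcd, rfl⟩ := PSTS.exists_eq_triple_of_side hL₂ hL₂X hqL₂ hq.2
  have ha₁' : a₁ ∈ X₁.erase p := mem_erase.2 ⟨by rintro rfl; exact hpq hL₁ (by simp) (by simp), ha₁⟩
  have hb₁' : b₁ ∈ X₁.erase p := mem_erase.2 ⟨by rintro rfl; exact hpq hL₁ (by simp) (by simp), hb₁⟩
  have hc' : c ∈ X₂.erase p := mem_erase.2 ⟨by rintro rfl; exact hpq hL₂ (by simp) (by simp), hc⟩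
  have hd' : d ∈ X₂.erase p := mem_erase.2 ⟨by rintro rfl; exact hpq hL₂ (by simp) (by simp), hd⟩
  rcases hP.not_collinear_labelling ha₁' hb₁' hab₁ hc' hd' hcd with ⟨h₁, h₂⟩ | ⟨h₁, h₂⟩
  · exact ⟨⟨q, a₁, b₁, c, d, hL₁, hL₂, h₁, h₂⟩, hq.1, hq.2, ha₁', hb₁', hc', hd'⟩
  · exact ⟨⟨q, a₁, b₁, d, c, hL₁, pair_comm c d ▸ hL₂, h₁, h₂⟩, hq.1, hq.2, ha₁', hb₁', hd', hc'⟩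

variable {s : LineSwitch M} {X : Finset S}

theorem exists_apex_line_of_switched (hP : IsFreePair M n X₁ X₂ p)
    (hs : s.SwitchesSides X₁ X₂ p) (hX : FreelyContains s.switched X) {x y : S} (hxX : x ∈ X)
    (hyX : y ∈ X) (hx : x ∈ X₁.erase p) (hy : y ∈ X₂.erase p) (h₁ : ¬(x = s.a₁ ∧ y = s.b₂))
    (h₂ : ¬(x = s.b₁ ∧ y = s.a₂)) :
    ∃ L ∈ M.lines, p ∈ L ∧ x ∈ L ∧ y ∈ L ∧ (L ∩ X).card = 2 := by
  have hx₁ := (mem_erase.1 hx).2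
  have hy₂ := (mem_erase.1 hy).2
  obtain ⟨L, hL, hxL, hyL, hL2⟩ := hX.1 x hxX y hyX fun h => hP.notMem_right hx (h ▸ hy₂)
  have hxq : x ≠ s.q := fun h => hs.q_notMem_left (h ▸ hx₁)
  have hyq : y ≠ s.q := fun h => hs.q_notMem_right (h ▸ hy₂)
  have hxa₂ : x ≠ s.a₂ := fun h => hP.symm.notMem_right hs.a₂_mem (h ▸ hx₁)
  have hxb₂ : x ≠ s.b₂ := fun h => hP.symm.notMem_right hs.b₂_mem (h ▸ hx₁)
  have hya₁ : y ≠ s.a₁ := fun h => hP.notMem_right hs.a₁_mem (h ▸ hy₂)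
  have hyb₁ : y ≠ s.b₁ := fun h => hP.notMem_right hs.b₁_mem (h ▸ hy₂)
  rcases s.mem_lines.1 hL with rfl | rfl | ⟨hL, -, -⟩
  · simp only [mem_insert, mem_singleton] at hxL hyL
    grind
  · simp only [mem_insert, mem_singleton] at hxL hyL
    grind
  · exact ⟨L, hL, hP.apex_mem hL hxL hx₁ hyL hy₂, hxL, hyL, hL2⟩

/-- The lines through `p` put the `n - 1 ≥ 3` other vertices of `X` into `X₁ ∪ X₂`, so some
`u ∈ X₁`, `t ∈ X₂` with `(u, t) ≠ (a₁, b₂)` are vertices of `X`, and the line joining them passes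
through `p`. -/
theorem false_of_apex_mem (hP : IsFreePair M n X₁ X₂ p) (hn : 4 ≤ n)
    (hs : s.SwitchesSides X₁ X₂ p) (hcard : X.card = n) (hX : FreelyContains s.switched X)
    (hp : p ∈ X) (ha₁ : s.a₁ ∈ X) (hb₂ : s.b₂ ∈ X) (hb₁ : s.b₁ ∉ X) : False := by
  set A₁ := (X ∩ X₁).erase p
  set A₂ := (X ∩ X₂).erase p
  have hcover : X.erase p ⊆ A₁ ∪ A₂ := by
    intro u hu
    obtain ⟨hup, huX⟩ := mem_erase.1 hu
    obtain ⟨L, hL, hpL, huL⟩ := hX.collinear hp huX hup.symm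
    have hL' := (hs.mem_lines_iff_of_apex_mem hP.apex_mem_left hpL).1 hL
    rcases mem_union.1 (hP.subset_union_of_apex_mem hL' hpL huL) with h | h
    · exact mem_union_left _ (mem_erase.2 ⟨hup, mem_inter.2 ⟨huX, h⟩⟩)
    · exact mem_union_right _ (mem_erase.2 ⟨hup, mem_inter.2 ⟨huX, h⟩⟩)
  have hsize : 2 < A₁.card + A₂.card := by
    have := (card_le_card hcover).trans (card_union_le A₁ A₂)
    rw [card_erase_of_mem hp, hcard] at this
    omega
  have ha₁A : s.a₁ ∈ A₁ :=
    mem_erase.2 ⟨(mem_erase.1 hs.a₁_mem).1, mem_inter.2 ⟨ha₁, (mem_erase.1 hs.a₁_mem).2⟩⟩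
  have hb₂A : s.b₂ ∈ A₂ :=
    mem_erase.2 ⟨(mem_erase.1 hs.b₂_mem).1, mem_inter.2 ⟨hb₂, (mem_erase.1 hs.b₂_mem).2⟩⟩
  obtain ⟨u, hu, t, ht, hut⟩ := exists_mem_mem_not_and ha₁A hb₂A hsize
  simp only [A₁, A₂, mem_erase, mem_inter] at hu ht
  have hu' : u ∈ X₁.erase p := mem_erase.2 ⟨hu.1, hu.2.2⟩
  obtain ⟨L, -, hpL, huL, htL, hL2⟩ := hP.exists_apex_line_of_switched hs hX hu.2.1 ht.2.1 hu'
    (mem_erase.2 ⟨ht.1, ht.2.2⟩) hut fun h => hb₁ (h.1 ▸ hu.2.1)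
  have := two_lt_card.2 ⟨p, mem_inter.2 ⟨hpL, hp⟩, u, mem_inter.2 ⟨huL, hu.2.1⟩, t,
    mem_inter.2 ⟨htL, ht.2.1⟩, hu.1.symm, ht.1.symm, fun h => hP.notMem_right hu' (h ▸ ht.2.2)⟩
  omega

/-- The partners `w ∈ X₂` of `a₁` and `x ∈ X₁` of `b₂` on the lines through `p` are vertices of
`X`, and the line joining them passes through `p`, so it is the line `{p, a₁, w}`. Hence `x = a₁`,
which is not collinear with `b₂`. -/
theorem false_of_apex_notMem (hP : IsFreePair M n X₁ X₂ p) (hs : s.SwitchesSides X₁ X₂ p)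
    (hcard : X.card = n) (hX : FreelyContains s.switched X) (hp : p ∉ X) (ha₁ : s.a₁ ∈ X)
    (hb₂ : s.b₂ ∈ X) (hb₁ : s.b₁ ∉ X) : False := by
  have hrank : ∀ x, pointRank s.switched x = n - 1 := fun x =>
    (s.pointRank_switched x).trans (hP.pointRank_eq x)
  have hswitched : ∀ {L}, L ∈ M.lines → p ∈ L → L ∈ s.switched.lines := fun hL hpL =>
    (hs.mem_lines_iff_of_apex_mem hP.apex_mem_left hpL).2 hL
  obtain ⟨w, hw, hJ₁⟩ := hP.exists_partner hs.a₁_mem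
  obtain ⟨x, hx, hJ₂⟩ := hP.symm.exists_partner hs.b₂_mem
  have hwX : w ∈ X := (hX.mem_or_mem hcard hrank
    (insert_comm p s.a₁ {w} ▸ hswitched hJ₁ (by simp)) ha₁).resolve_left hp
  have hxX : x ∈ X := (hX.mem_or_mem hcard hrank
    (insert_comm p s.b₂ {x} ▸ hswitched hJ₂ (by simp)) hb₂).resolve_left hp
  have hwb₂ : w ≠ s.b₂ := fun h => s.not_collinear_a₁_b₂ ⟨_, hJ₁, by simp, by simp [← h]⟩
  obtain ⟨L, hL, hpL, hxL, hwL, -⟩ := hP.exists_apex_line_of_switched hs hX hxX hwX hx hw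
    (fun h => hwb₂ h.2) fun h => hb₁ (h.1 ▸ hxX)
  rw [M.unique _ hL _ hJ₁ p w (mem_erase.1 hw).1.symm hpL hwL (by simp) (by simp)] at hxL
  simp only [mem_insert, mem_singleton] at hxL
  rcases hxL with rfl | rfl | rfl
  · exact (mem_erase.1 hx).1 rfl
  · exact s.not_collinear_a₁_b₂ ⟨_, hJ₂, by simp, by simp⟩
  · exact hP.notMem_right hx (mem_erase.1 hw).2

theorem false_of_mem_a₁_b₂ (hP : IsFreePair M n X₁ X₂ p) (hn : 4 ≤ n)
    (hs : s.SwitchesSides X₁ X₂ p) (hcard : X.card = n) (hX : FreelyContains s.switched X)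
    (ha₁ : s.a₁ ∈ X) (hb₂ : s.b₂ ∈ X) (hb₁ : s.b₁ ∉ X) : False := by
  by_cases hp : p ∈ X
  · exact hP.false_of_apex_mem hn hs hcard hX hp ha₁ hb₂ hb₁
  · exact hP.false_of_apex_notMem hs hcard hX hp ha₁ hb₂ hb₁

theorem not_freelyContains_switched (hP : IsFreePair M n X₁ X₂ p) (hn : 4 ≤ n)
    (hs : s.SwitchesSides X₁ X₂ p)
    (hexact : ∀ X : Finset S, X.card = n → FreelyContains M X → X = X₁ ∨ X = X₂)
    (hcard : X.card = n) : ¬FreelyContains s.switched X := by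
  intro hX
  have hX' : FreelyContains s.swap.switched X := s.swap_switched ▸ hX
  have h₁ : ¬(s.a₁ ∈ X ∧ s.b₁ ∈ X) := fun h =>
    s.not_collinear_switched_a₁_b₁ (hX.collinear h.1 h.2 s.a₁_ne_b₁)
  have h₂ : ¬(s.a₂ ∈ X ∧ s.b₂ ∈ X) := fun h =>
    s.not_collinear_switched_a₂_b₂ (hX.collinear h.1 h.2 s.a₂_ne_b₂)
  by_cases h₃ : s.a₁ ∈ X ∧ s.b₂ ∈ X
  · exact hP.false_of_mem_a₁_b₂ hn hs hcard hX h₃.1 h₃.2 fun h => h₁ ⟨h₃.1, h⟩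
  by_cases h₄ : s.b₁ ∈ X ∧ s.a₂ ∈ X
  · exact hP.false_of_mem_a₁_b₂ hn hs.swap hcard hX' h₄.1 h₄.2 fun h => h₁ ⟨h, h₄.1⟩
  have hfree : FreelyContains M X := by
    by_cases hq : s.q ∈ X
    · have hrank : ∀ x, pointRank s.switched x = n - 1 := fun x =>
        (s.pointRank_switched x).trans (hP.pointRank_eq x)
      have hN₁ := hX.mem_or_mem hcard hrank (s.mem_lines.2 (Or.inl rfl)) hq
      have hN₂ := hX.mem_or_mem hcard hrank (s.mem_lines.2 (Or.inr (Or.inl rfl))) hq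
      by_cases ha₁ : s.a₁ ∈ X
      · exact s.freelyContains_of_switched hq ha₁ (by tauto) (by tauto) (by tauto) hX
      · exact s.swap.freelyContains_of_switched hq (by tauto) (by tauto) ha₁ (by tauto) hX'
    · exact (s.freelyContains_switched_iff hq h₁ h₂ h₃ h₄).1 hX
  rcases hexact X hcard hfree with rfl | rfl
  · exact h₁ ⟨(mem_erase.1 hs.a₁_mem).2, (mem_erase.1 hs.b₁_mem).2⟩
  · exact h₂ ⟨(mem_erase.1 hs.a₂_mem).2, (mem_erase.1 hs.b₂_mem).2⟩

end IsFreePair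

end

/-- If there is a B(n+1)-configuration freely containing exactly
two K_n-graphs (n ≥ 4), then there is a B(n+1)-configuration freely containing
no K_n-graph at all. -/
theorem stmt_17 (n : ℕ) (hn : 4 ≤ n)
    (h : ∃ M : PSTS (Fin (Nat.choose (n + 1) 2)), IsBinomial M (n + 1) ∧
      ExactlyKGraphs M n 2) :
    ∃ M' : PSTS (Fin (Nat.choose (n + 1) 2)), IsBinomial M' (n + 1) ∧
      ExactlyKGraphs M' n 0 := by
  obtain ⟨M, ⟨hS, hlines, hrank⟩, f, hf, hfree, hexact⟩ := h
  have hrank' : ∀ x, pointRank M x = n - 1 := fun x => (hrank x).trans (by omega)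
  obtain ⟨p, hp⟩ := exists_inter_eq_singleton hS hrank' (hfree 0).2 (hfree 1).2 (hfree 0).1
    (hfree 1).1 (hf.ne (by decide))
  have hP : IsFreePair M n (f 0) (f 1) p :=
    ⟨hrank', (hfree 0).1, (hfree 1).1, (hfree 0).2, (hfree 1).2, hp⟩
  obtain ⟨s, hs⟩ := hP.exists_lineSwitch hS (by omega)
  have hnone : ∀ X, X.card = n → ¬FreelyContains s.switched X :=
    fun X => hP.not_freelyContains_switched hn hs fun X hX hXfree =>
      Fin.exists_fin_two.1 (hexact X hX hXfree)
  exact ⟨s.switched, ⟨hS, s.card_lines.trans hlines, fun x =>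
    (s.pointRank_switched x).trans (hrank x)⟩, Fin.elim0, fun i => i.elim0, fun i => i.elim0,
    fun X hX hXfree => (hnone X hX hXfree).elim⟩
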